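/- arXiv:2604.03268 — 7 statements merged into one kernel-verified Lean document; each statement's English description precedes it below -/
import Mathlib

section
/- Let (γ, ν) be a non-lightlike Legendre curve in R^2_1 with ν = (a,b), δ = a^2 - b^2 ∈ {±1}, μ = (b,a), l(u) = δ⟨ν'(u), μ(u)⟩ and β(u) = δ⟨γ'(u), μ(u)⟩. Then the Frenet-type formulas hold: ν'(u) = l(u) μ(u), μ'(u) = l(u) ν(u), and γ'(u) = β(u) μ(u). -/
/-- Pseudo inner product on `ℝ²₁` with signature `(-,+)`. -/
def mink2 (x y : ℝ × ℝ) : ℝ := -(x.1 * y.1) + x.2 * y.2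

theorem frenet_type_formulas (γ ν : ℝ → ℝ × ℝ) (a b l β : ℝ → ℝ) (δ : ℝ)
    (hγ : ContDiff ℝ (⊤ : ℕ∞) γ) (hν : ContDiff ℝ (⊤ : ℕ∞) ν)
    (ha : ContDiff ℝ (⊤ : ℕ∞) a) (hb : ContDiff ℝ (⊤ : ℕ∞) b)
    (hab : ν = fun u => (a u, b u))
    (hδ : ∀ u, a u ^ 2 - b u ^ 2 = δ) (hδ1 : δ = 1 ∨ δ = -1)
    (hLeg : ∀ u, mink2 (deriv γ u) (ν u) = 0)
    (hl : ∀ u, l u = δ * mink2 (deriv ν u) (b u, a u))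
    (hβ : ∀ u, β u = δ * mink2 (deriv γ u) (b u, a u)) :
    ∀ u, deriv ν u = l u • ((b u, a u) : ℝ × ℝ) ∧
      deriv (fun t => ((b t, a t) : ℝ × ℝ)) u = l u • ν u ∧
      deriv γ u = β u • ((b u, a u) : ℝ × ℝ) := by
  intro u
  have hda : HasDerivAt a (deriv a u) u := (ha.differentiable (by simp) u).hasDerivAt
  have hdb : HasDerivAt b (deriv b u) u := (hb.differentiable (by simp) u).hasDerivAt
  have hνd : deriv ν u = (deriv a u, deriv b u) := by
    rw [hab]; exact (hda.prodMk hdb).deriv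
  have hμd : deriv (fun t => ((b t, a t) : ℝ × ℝ)) u = (deriv b u, deriv a u) :=
    (hdb.prodMk hda).deriv
  have hkey : a u * deriv a u = b u * deriv b u := by
    have hc : deriv (fun t => a t ^ 2 - b t ^ 2) u = 0 := by
      have he : (fun t => a t ^ 2 - b t ^ 2) = fun _ => δ := funext hδ
      rw [he]; simp
    have h1 : HasDerivAt (fun t => a t ^ 2 - b t ^ 2)
        (2 * a u * deriv a u - 2 * b u * deriv b u) u := by
      have := (hda.fun_pow 2).fun_sub (hdb.fun_pow 2)
      exact this.congr_deriv (by ring)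
    have := h1.deriv
    rw [hc] at this
    linarith
  have hδ2 : δ * δ = 1 := by rcases hδ1 with h | h <;> rw [h] <;> norm_num
  have hLeg' : -((deriv γ u).1 * a u) + (deriv γ u).2 * b u = 0 := by
    have := hLeg u; rw [hab] at this; simpa [mink2] using this
  have hlu : l u = δ * (-(deriv a u * b u) + deriv b u * a u) := by
    rw [hl u, hνd]; simp [mink2]
  have hβu : β u = δ * (-((deriv γ u).1 * b u) + (deriv γ u).2 * a u) := by
    rw [hβ u]; simp [mink2]
  refine ⟨?_, ?_, ?_⟩
  · rw [hνd, Prod.smul_mk, smul_eq_mul, smul_eq_mul, Prod.mk.injEq]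
    constructor
    · rw [hlu]
      linear_combination (δ * a u) * hkey + (-δ * deriv a u) * hδ u + (-deriv a u) * hδ2
    · rw [hlu]
      linear_combination (δ * b u) * hkey + (-δ * deriv b u) * hδ u + (-deriv b u) * hδ2
  · rw [hμd, hab]; simp only [Prod.smul_mk, smul_eq_mul, Prod.mk.injEq]
    constructor
    · rw [hlu]
      linear_combination (δ * b u) * hkey + (-δ * deriv b u) * hδ u + (-deriv b u) * hδ2
    · rw [hlu]
      linear_combination (δ * a u) * hkey + (-δ * deriv a u) * hδ u + (-deriv a u) * hδ2
  · have : deriv γ u = ((deriv γ u).1, (deriv γ u).2) := rfl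
    rw [this, Prod.smul_mk, smul_eq_mul, smul_eq_mul, Prod.mk.injEq]
    constructor
    · rw [hβu]
      linear_combination (-δ * a u) * hLeg' + (-δ * (deriv γ u).1) * hδ u + (-(deriv γ u).1) * hδ2
    · rw [hβu]
      linear_combination (-δ * b u) * hLeg' + (-δ * (deriv γ u).2) * hδ u + (-(deriv γ u).2) * hδ2
end

section
/- The 1-type helicoidal surface r1(u,v) = (x1(u)+λv, x2(u) sin v, x2(u) cos v) is singular at (u0,v0) (i.e., its partial derivatives ∂r1/∂u and ∂r1/∂v are linearly dependent at (u0,v0)) if and only if β(u0) = 0 or (a(u0) = 0 and x2(u0) = 0). -/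
theorem r1_singular_iff (x1 x2 a b β : ℝ → ℝ) (δ lam : ℝ) (hlam : lam ≠ 0)
    (hδ : ∀ u, a u ^ 2 - b u ^ 2 = δ) (hδ1 : δ = 1 ∨ δ = -1)
    (hx1 : ∀ u, HasDerivAt x1 (β u * b u) u)
    (hx2 : ∀ u, HasDerivAt x2 (β u * a u) u)
    (u0 v0 : ℝ) :
    ¬ LinearIndependent ℝ
      ![((β u0 * b u0, β u0 * a u0 * Real.sin v0, β u0 * a u0 * Real.cos v0) : ℝ × ℝ × ℝ),
        ((lam, x2 u0 * Real.cos v0, -(x2 u0 * Real.sin v0)) : ℝ × ℝ × ℝ)] ↔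
      β u0 = 0 ∨ (a u0 = 0 ∧ x2 u0 = 0) := by
  set B := β u0
  set A := a u0
  set bb := b u0
  set X := x2 u0
  have hsc : Real.sin v0 ^ 2 + Real.cos v0 ^ 2 = 1 := Real.sin_sq_add_cos_sq v0
  rw [LinearIndependent.pair_iff]
  push_neg
  constructor
  · rintro ⟨s, t, heq, hne⟩
    have h1 : s * (B * bb) + t * lam = 0 := congrArg Prod.fst heq
    have h2 : s * (B * A * Real.sin v0) + t * (X * Real.cos v0) = 0 :=
      congrArg (fun p => p.2.1) heq
    have h3 : s * (B * A * Real.cos v0) + t * (-(X * Real.sin v0)) = 0 :=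
      congrArg (fun p => p.2.2) heq
    have hBA : s * (B * A) = 0 := by
      linear_combination Real.sin v0 * h2 + Real.cos v0 * h3 - s * B * A * hsc
    have hX : t * X = 0 := by
      linear_combination Real.cos v0 * h2 - Real.sin v0 * h3 - t * X * hsc
    have hs : s ≠ 0 := by
      intro hs0
      have ht : t * lam = 0 := by rw [hs0] at h1; linarith
      rcases mul_eq_zero.1 ht with h | h
      · exact hne hs0 h
      · exact hlam h
    by_cases hB : B = 0
    · exact Or.inl hB
    · right
      have hA : A = 0 := by
        rcases mul_eq_zero.1 hBA with h | h
        · exact absurd h hs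
        · rcases mul_eq_zero.1 h with h | h
          · exact absurd h hB
          · exact h
      refine ⟨hA, ?_⟩
      have hδu : A ^ 2 - bb ^ 2 = δ := hδ u0
      have hbb : bb ≠ 0 := by
        intro h0
        rw [hA, h0] at hδu
        rcases hδ1 with h | h <;> simp [h] at hδu <;> linarith
      have ht : t ≠ 0 := by
        intro ht0
        rw [ht0] at h1
        simp at h1
        rcases h1 with h | h | h
        · exact hs h
        · exact hB h
        · exact hbb h
      rcases mul_eq_zero.1 hX with h | h
      · exact absurd h ht
      · exact h
  · rintro (hB | ⟨hA, hX⟩)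
    · exact ⟨1, 0, by simp [hB, Prod.ext_iff], by norm_num⟩
    · refine ⟨lam, -(B * bb), ?_, fun h => absurd h hlam⟩
      simp [hA, hX, Prod.ext_iff]
      ring
end

section
/- Suppose δ = a(u)^2 - b(u)^2 = 1. Define ℓ1^+(u,v) = (a(u), b(u) sin v + cos v, b(u) cos v - sin v) and ℓ1^-(u,v) = (a(u), b(u) sin v - cos v, b(u) cos v + sin v). Then both ℓ1^±(u,v) are lightlike (⟨ℓ1^±, ℓ1^±⟩ = 0), ⟨ℓ1^+, ℓ1^-⟩ = -2, and (∂r1/∂u) ∧ (∂r1/∂v) = (β(u)(x2(u)+λa(u))/2) ℓ1^+(u,v) + (β(u)(x2(u)-λa(u))/2) ℓ1^-(u,v). Hence r1 is a lightcone framed base surface. -/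
/-- Pseudo inner product on Lorentz-Minkowski 3-space. -/
def mink3 (x y : ℝ × ℝ × ℝ) : ℝ := -(x.1 * y.1) + x.2.1 * y.2.1 + x.2.2 * y.2.2

/-- Pseudo wedge product on Lorentz-Minkowski 3-space. -/
def wedge3 (x y : ℝ × ℝ × ℝ) : ℝ × ℝ × ℝ :=
  (-(x.2.1 * y.2.2 - x.2.2 * y.2.1), x.2.2 * y.1 - x.1 * y.2.2, x.1 * y.2.1 - x.2.1 * y.1)

theorem r1_lightcone_framed (x1 x2 a b β : ℝ → ℝ) (lam : ℝ) (hlam : lam ≠ 0)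
    (hδ : ∀ u, a u ^ 2 - b u ^ 2 = 1)
    (hx1 : ∀ u, HasDerivAt x1 (β u * b u) u)
    (hx2 : ∀ u, HasDerivAt x2 (β u * a u) u)
    (ℓp ℓm : ℝ → ℝ → ℝ × ℝ × ℝ)
    (hℓp : ∀ u v, ℓp u v = (a u, b u * Real.sin v + Real.cos v, b u * Real.cos v - Real.sin v))
    (hℓm : ∀ u v, ℓm u v = (a u, b u * Real.sin v - Real.cos v, b u * Real.cos v + Real.sin v)) :
    ∀ u v, mink3 (ℓp u v) (ℓp u v) = 0 ∧ mink3 (ℓm u v) (ℓm u v) = 0 ∧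
      mink3 (ℓp u v) (ℓm u v) = -2 ∧
      ∀ pu pv : ℝ × ℝ × ℝ,
        HasDerivAt (fun t => ((x1 t + lam * v, x2 t * Real.sin v, x2 t * Real.cos v) : ℝ × ℝ × ℝ)) pu u →
        HasDerivAt (fun t => ((x1 u + lam * t, x2 u * Real.sin t, x2 u * Real.cos t) : ℝ × ℝ × ℝ)) pv v →
        wedge3 pu pv = (β u * (x2 u + lam * a u) / 2) • ℓp u v
          + (β u * (x2 u - lam * a u) / 2) • ℓm u v := by
  intro u v
  have hs : Real.sin v ^ 2 + Real.cos v ^ 2 = 1 := Real.sin_sq_add_cos_sq v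
  have hab := hδ u
  refine ⟨?_, ?_, ?_, ?_⟩
  · simp only [mink3, hℓp]; nlinarith [hs, hab]
  · simp only [mink3, hℓm]; nlinarith [hs, hab]
  · simp only [mink3, hℓp, hℓm]; nlinarith [hs, hab]
  · intro pu pv hpu hpv
    have hu : HasDerivAt (fun t => ((x1 t + lam * v, x2 t * Real.sin v, x2 t * Real.cos v) : ℝ × ℝ × ℝ))
        ((β u * b u, β u * a u * Real.sin v, β u * a u * Real.cos v) : ℝ × ℝ × ℝ) u := by
      exact ((hx1 u).add_const _).prodMk (((hx2 u).mul_const _).prodMk ((hx2 u).mul_const _))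
    have hv : HasDerivAt (fun t => ((x1 u + lam * t, x2 u * Real.sin t, x2 u * Real.cos t) : ℝ × ℝ × ℝ))
        ((lam, x2 u * Real.cos v, x2 u * -Real.sin v) : ℝ × ℝ × ℝ) v := by
      have := (((hasDerivAt_id v).const_mul lam).const_add (x1 u)).prodMk
        (((Real.hasDerivAt_sin v).const_mul (x2 u)).prodMk ((Real.hasDerivAt_cos v).const_mul (x2 u)))
      simpa using this
    have h1 := hpu.unique hu
    have h2 := hpv.unique hv
    subst h1 h2
    simp only [wedge3, hℓp, hℓm, Prod.smul_mk, smul_eq_mul, Prod.mk_add_mk, Prod.mk.injEq]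
    refine ⟨by linear_combination (β u * a u * x2 u) * hs, by ring, by ring⟩
end

section
/- The 2-type helicoidal surface r2(u,v) = (x1(u) cosh v, x1(u) sinh v, x2(u)+λv) is singular at (u0,v0) if and only if β(u0) = 0 or (b(u0) = 0 and x1(u0) = 0). -/
theorem r2_singular_iff (x1 x2 a b β : ℝ → ℝ) (δ lam : ℝ) (hlam : lam ≠ 0)
    (hδ : ∀ u, a u ^ 2 - b u ^ 2 = δ) (hδ1 : δ = 1 ∨ δ = -1)
    (hx1 : ∀ u, HasDerivAt x1 (β u * b u) u)
    (hx2 : ∀ u, HasDerivAt x2 (β u * a u) u)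
    (u0 v0 : ℝ) :
    ¬ LinearIndependent ℝ
      ![((β u0 * b u0 * Real.cosh v0, β u0 * b u0 * Real.sinh v0, β u0 * a u0) : ℝ × ℝ × ℝ),
        ((x1 u0 * Real.sinh v0, x1 u0 * Real.cosh v0, lam) : ℝ × ℝ × ℝ)] ↔
      β u0 = 0 ∨ (b u0 = 0 ∧ x1 u0 = 0) := by
  rw [LinearIndependent.pair_iff]
  push_neg
  constructor
  · rintro ⟨s, t, hst, hne⟩
    obtain ⟨h1, h2, h3⟩ : s * (β u0 * b u0 * Real.cosh v0) + t * (x1 u0 * Real.sinh v0) = 0 ∧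
        s * (β u0 * b u0 * Real.sinh v0) + t * (x1 u0 * Real.cosh v0) = 0 ∧
        s * (β u0 * a u0) + t * lam = 0 := by
      simpa [Prod.ext_iff] using hst
    have hc := Real.cosh_sq_sub_sinh_sq v0
    have hsb : s * (β u0 * b u0) = 0 := by
      linear_combination Real.cosh v0 * h1 - Real.sinh v0 * h2 - s * (β u0 * b u0) * hc
    have htx : t * x1 u0 = 0 := by
      linear_combination Real.cosh v0 * h2 - Real.sinh v0 * h1 - t * x1 u0 * hc
    have hs : s ≠ 0 := by
      rintro rfl
      have ht : t = 0 := by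
        simp only [zero_mul, zero_add] at h3
        rcases mul_eq_zero.mp h3 with h | h
        · exact h
        · exact absurd h hlam
      exact hne rfl ht
    by_cases hβ : β u0 = 0
    · exact Or.inl hβ
    have hb : b u0 = 0 := by
      rcases mul_eq_zero.mp hsb with h | h
      · exact absurd h hs
      rcases mul_eq_zero.mp h with h' | h'
      · exact absurd h' hβ
      · exact h'
    refine Or.inr ⟨hb, ?_⟩
    have ha : a u0 ^ 2 = δ := by have := hδ u0; rw [hb] at this; linarith
    have hδpos : δ = 1 := by
      rcases hδ1 with h | h
      · exact h
      · exfalso; rw [h] at ha; nlinarith [sq_nonneg (a u0)]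
    have ha0 : a u0 ≠ 0 := by
      intro h; rw [h, hδpos] at ha; norm_num at ha
    rcases mul_eq_zero.mp htx with ht | hx
    · exfalso
      rw [ht, zero_mul, add_zero] at h3
      rcases mul_eq_zero.mp h3 with h | h
      · exact hs h
      · rcases mul_eq_zero.mp h with h' | h'
        · exact hβ h'
        · exact ha0 h'
    · exact hx
  · rintro (hβ | ⟨hb, hx⟩)
    · exact ⟨1, 0, by simp [hβ, Prod.ext_iff], fun h => absurd h one_ne_zero⟩
    · refine ⟨lam, -(β u0 * a u0), ?_, fun h => absurd h hlam⟩
      simp [hb, hx, Prod.ext_iff]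
      ring
end

section
/- For the 2-type helicoidal surface r2 with δ = 1, defining ℓ2^±(u,v) = (a(u) cosh v ± sinh v, a(u) sinh v ± cosh v, b(u)), these are lightlike vectors with ⟨ℓ2^+, ℓ2^-⟩ = -2, and (∂r2/∂u) ∧ (∂r2/∂v) = (β(u)(x1(u)-λb(u))/2) ℓ2^+ + (β(u)(x1(u)+λb(u))/2) ℓ2^-. Hence r2 is a lightcone framed base surface. -/
theorem r2_lightcone_framed (x1 x2 a b β : ℝ → ℝ) (lam : ℝ) (hlam : lam ≠ 0)
    (hδ : ∀ u, a u ^ 2 - b u ^ 2 = 1)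
    (hx1 : ∀ u, HasDerivAt x1 (β u * b u) u)
    (hx2 : ∀ u, HasDerivAt x2 (β u * a u) u)
    (ℓp ℓm : ℝ → ℝ → ℝ × ℝ × ℝ)
    (hℓp : ∀ u v, ℓp u v =
      (a u * Real.cosh v + Real.sinh v, a u * Real.sinh v + Real.cosh v, b u))
    (hℓm : ∀ u v, ℓm u v =
      (a u * Real.cosh v - Real.sinh v, a u * Real.sinh v - Real.cosh v, b u)) :
    ∀ u v, mink3 (ℓp u v) (ℓp u v) = 0 ∧ mink3 (ℓm u v) (ℓm u v) = 0 ∧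
      mink3 (ℓp u v) (ℓm u v) = -2 ∧
      ∀ pu pv : ℝ × ℝ × ℝ,
        HasDerivAt (fun t => ((x1 t * Real.cosh v, x1 t * Real.sinh v, x2 t + lam * v) : ℝ × ℝ × ℝ)) pu u →
        HasDerivAt (fun t => ((x1 u * Real.cosh t, x1 u * Real.sinh t, x2 u + lam * t) : ℝ × ℝ × ℝ)) pv v →
        wedge3 pu pv = (β u * (x1 u - lam * b u) / 2) • ℓp u v
          + (β u * (x1 u + lam * b u) / 2) • ℓm u v := by
  intro u v
  have hc := Real.cosh_sq_sub_sinh_sq v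
  have hd := hδ u
  refine ⟨?_, ?_, ?_, ?_⟩
  · simp only [hℓp, mink3]; nlinarith [hc, hd]
  · simp only [hℓm, mink3]; nlinarith [hc, hd]
  · simp only [hℓp, hℓm, mink3]; nlinarith [hc, hd]
  · intro pu pv hpu hpv
    have h1 : HasDerivAt (fun t => ((x1 t * Real.cosh v, x1 t * Real.sinh v, x2 t + lam * v) : ℝ × ℝ × ℝ))
        ((β u * b u * Real.cosh v, β u * b u * Real.sinh v, β u * a u)) u := by
      exact (((hx1 u).mul_const _).prodMk (((hx1 u).mul_const _).prodMk ((hx2 u).add_const _)))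
    have h2 : HasDerivAt (fun t => ((x1 u * Real.cosh t, x1 u * Real.sinh t, x2 u + lam * t) : ℝ × ℝ × ℝ))
        ((x1 u * Real.sinh v, x1 u * Real.cosh v, lam)) v := by
      exact ((Real.hasDerivAt_cosh v).const_mul _).prodMk
        (((Real.hasDerivAt_sinh v).const_mul _).prodMk ((hasDerivAt_id v).const_mul lam |>.const_add _ |>.congr_deriv (by ring)))
    have e1 : pu = (β u * b u * Real.cosh v, β u * b u * Real.sinh v, β u * a u) := hpu.unique h1
    have e2 : pv = (x1 u * Real.sinh v, x1 u * Real.cosh v, lam) := hpv.unique h2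
    subst e1 e2
    simp only [hℓp, hℓm, wedge3, Prod.smul_mk, smul_eq_mul, Prod.mk_add_mk, Prod.mk.injEq]
    refine ⟨by ring, by ring, by linear_combination (β u * b u * x1 u) * hc⟩
end

section
/- Let r1(u,v) = (x1(u)+λv, x2(u) sin v, x2(u) cos v) and define φ1(u,v) = (u, x1(u)+λv) and ψ1(x,y,z) = (x, y sin(x/λ) + z cos(x/λ), -y cos(x/λ) + z sin(x/λ)). Then ψ1 ∘ r1 ∘ φ1^{-1}(ū, v̄) = (v̄, x2(ū) cos(x1(ū)/λ), x2(ū) sin(x1(ū)/λ)); in particular the singular behavior of r1 is captured by the planar curve γ1(ū) = (x2(ū) cos(x1(ū)/λ), x2(ū) sin(x1(ū)/λ)). -/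
theorem psi1_r1_phi1_inv (x1 x2 : ℝ → ℝ) (lam : ℝ) (hlam : lam ≠ 0)
    (hx1 : ContDiff ℝ (⊤ : ℕ∞) x1) (hx2 : ContDiff ℝ (⊤ : ℕ∞) x2)
    (r1 : ℝ → ℝ → ℝ × ℝ × ℝ)
    (hr1 : ∀ u v, r1 u v = (x1 u + lam * v, x2 u * Real.sin v, x2 u * Real.cos v))
    (ψ1 : ℝ × ℝ × ℝ → ℝ × ℝ × ℝ)
    (hψ1 : ∀ p : ℝ × ℝ × ℝ, ψ1 p =
      (p.1, p.2.1 * Real.sin (p.1 / lam) + p.2.2 * Real.cos (p.1 / lam),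
        -(p.2.1 * Real.cos (p.1 / lam)) + p.2.2 * Real.sin (p.1 / lam)))
    (φ1inv : ℝ × ℝ → ℝ × ℝ)
    (hφ1inv : ∀ q : ℝ × ℝ, φ1inv q = (q.1, (q.2 - x1 q.1) / lam)) :
    ∀ ub vb : ℝ, ψ1 (r1 (φ1inv (ub, vb)).1 (φ1inv (ub, vb)).2) =
      (vb, x2 ub * Real.cos (x1 ub / lam), x2 ub * Real.sin (x1 ub / lam)) := by
  intro ub vb
  have hfirst : x1 ub + lam * ((vb - x1 ub) / lam) = vb := by field_simp; ring
  simp only [hφ1inv, hr1, hψ1, hfirst]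
  have hang : vb / lam - (vb - x1 ub) / lam = x1 ub / lam := by ring
  rw [Prod.mk.injEq, Prod.mk.injEq]
  refine ⟨rfl, ?_, ?_⟩
  · have := Real.cos_sub (vb / lam) ((vb - x1 ub) / lam)
    rw [hang] at this
    rw [this]; ring
  · have := Real.sin_sub (vb / lam) ((vb - x1 ub) / lam)
    rw [hang] at this
    rw [this]; ring
end

section
/- For the 2-type helicoidal surface r2(u,v) = ((u^2/2) cosh v, (u^2/2) sinh v, u^3/3 + v) (λ = 1), the pseudo wedge product of the partials equals u·((u^3/2) cosh v - sinh v, (u^3/2) sinh v - cosh v, u^2/2); hence the singular set of r2 is exactly {(0,v) : v ∈ R}. -/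
theorem example2_singular_set
    (r2 : ℝ → ℝ → ℝ × ℝ × ℝ)
    (hr2 : ∀ u v, r2 u v = (u ^ 2 / 2 * Real.cosh v, u ^ 2 / 2 * Real.sinh v, u ^ 3 / 3 + v)) :
    ∀ u v : ℝ,
      wedge3 (deriv (fun t => r2 t v) u) (deriv (fun t => r2 u t) v) =
        u • ((u ^ 3 / 2 * Real.cosh v - Real.sinh v,
              u ^ 3 / 2 * Real.sinh v - Real.cosh v, u ^ 2 / 2) : ℝ × ℝ × ℝ) ∧
      (wedge3 (deriv (fun t => r2 t v) u) (deriv (fun t => r2 u t) v) = 0 ↔ u = 0) := by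
  intro u v
  have h1 : HasDerivAt (fun t => r2 t v)
      ((u * Real.cosh v, u * Real.sinh v, u ^ 2) : ℝ × ℝ × ℝ) u := by
    have : (fun t => r2 t v) =
        fun t : ℝ => ((t ^ 2 / 2 * Real.cosh v, t ^ 2 / 2 * Real.sinh v,
          t ^ 3 / 3 + v) : ℝ × ℝ × ℝ) := by
      funext t; exact hr2 t v
    rw [this]
    have ha : HasDerivAt (fun t : ℝ => t ^ 2 / 2 * Real.cosh v) (u * Real.cosh v) u := by
      have := ((hasDerivAt_pow 2 u).div_const 2).mul_const (Real.cosh v)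
      simpa using this.congr_deriv (by ring)
    have hb : HasDerivAt (fun t : ℝ => t ^ 2 / 2 * Real.sinh v) (u * Real.sinh v) u := by
      have := ((hasDerivAt_pow 2 u).div_const 2).mul_const (Real.sinh v)
      simpa using this.congr_deriv (by ring)
    have hc : HasDerivAt (fun t : ℝ => t ^ 3 / 3 + v) (u ^ 2) u := by
      have := ((hasDerivAt_pow 3 u).div_const 3).add_const v
      simpa using this.congr_deriv (by ring)
    exact ha.prodMk (hb.prodMk hc)
  have h2 : HasDerivAt (fun t => r2 u t)
      ((u ^ 2 / 2 * Real.sinh v, u ^ 2 / 2 * Real.cosh v, 1) : ℝ × ℝ × ℝ) v := by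
    have : (fun t => r2 u t) =
        fun t : ℝ => ((u ^ 2 / 2 * Real.cosh t, u ^ 2 / 2 * Real.sinh t,
          u ^ 3 / 3 + t) : ℝ × ℝ × ℝ) := by
      funext t; exact hr2 u t
    rw [this]
    have ha : HasDerivAt (fun t : ℝ => u ^ 2 / 2 * Real.cosh t) (u ^ 2 / 2 * Real.sinh v) v :=
      (Real.hasDerivAt_cosh v).const_mul _
    have hb : HasDerivAt (fun t : ℝ => u ^ 2 / 2 * Real.sinh t) (u ^ 2 / 2 * Real.cosh v) v :=
      (Real.hasDerivAt_sinh v).const_mul _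
    have hc : HasDerivAt (fun t : ℝ => u ^ 3 / 3 + t) 1 v :=
      (hasDerivAt_id v).const_add _
    exact ha.prodMk (hb.prodMk hc)
  rw [h1.deriv, h2.deriv]
  have hch : Real.cosh v ^ 2 - Real.sinh v ^ 2 = 1 := Real.cosh_sq_sub_sinh_sq v
  constructor
  · simp only [wedge3, Prod.smul_mk, smul_eq_mul, Prod.mk.injEq]
    refine ⟨by ring, by ring, by linear_combination (u ^ 3 / 2) * hch⟩
  · constructor
    · intro h
      have h3 := congrArg (fun p : ℝ × ℝ × ℝ => p.2.2) h
      simp only [wedge3, Prod.snd_zero] at h3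
      have h4 : u ^ 3 / 2 = 0 := by linear_combination h3 - (u ^ 3 / 2) * hch
      have h5 : u ^ 3 = 0 := by linarith
      exact pow_eq_zero_iff (by norm_num) |>.mp h5
    · intro h
      subst h
      simp [wedge3]
end
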